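/- arXiv:2602.10747 — 6 statements merged into one kernel-verified Lean document; each statement's English description precedes it below -/
import Mathlib

section
/- Let G = (V, E) be a directed graph and H a set of additional edges on V. Then H is a certified shortcut of G (i.e., for every edge (u,v) in H there exists a vertex w with (u,w) and (w,v) both in E ∪ H) if and only if H can be constructed by a |H|-step shortcutting procedure: an ordering e_1, ..., e_{|H|} of the edges of H such that for each i, writing e_i = (u,v), there exist edges (u,w), (w,v) in E ∪ {e_1, ..., e_{i-1}}. -/
/-- `H` is a certified shortcut of the graph with edge set `E`: every edge of `H`
has a length-2 certificate in `E ∪ H`. -/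
def CertifiedShortcut {V : Type*} [DecidableEq V] (E H : Finset (V × V)) : Prop :=
  ∀ e ∈ H, ∃ w : V, (e.1, w) ∈ E ∪ H ∧ (w, e.2) ∈ E ∪ H

/-- A certified shortcut is exactly an edge set constructible by an `|H|`-step
shortcutting procedure: there is an ordering of the edges of `H` such that each
edge has a length-2 certificate among `E` and the earlier edges. (We assume `G`
is a DAG, encoded by a topological order `f` respected by `E ∪ H`.) -/
theorem certified_iff_shortcutting_procedure
    {V : Type*} [DecidableEq V] (E H : Finset (V × V))
    (f : V → ℕ) (hdag : ∀ e ∈ E ∪ H, f e.1 < f e.2) :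
    CertifiedShortcut E H ↔
      ∃ l : List (V × V), l.Nodup ∧ l.toFinset = H ∧
        ∀ (i : ℕ) (hi : i < l.length),
          ∃ w : V, ((l.get ⟨i, hi⟩).1, w) ∈ E ∪ (l.take i).toFinset ∧
            (w, (l.get ⟨i, hi⟩).2) ∈ E ∪ (l.take i).toFinset := by
  constructor
  · intro hcert
    set m : V × V → ℕ := fun e => f e.2 - f e.1 with hm
    set l := H.toList.mergeSort (fun a b => m a ≤ m b) with hl
    have hperm : l.Perm H.toList := List.mergeSort_perm _ _
    have hnd : l.Nodup := hperm.nodup_iff.mpr H.nodup_toList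
    have hfin : l.toFinset = H := by
      rw [← H.toList_toFinset]
      exact List.toFinset_eq_of_perm _ _ hperm
    have hsorted : l.Pairwise (fun a b => m a ≤ m b) := by
      have := List.pairwise_mergeSort (le := fun a b => decide (m a ≤ m b))
        (fun a b c h₁ h₂ => by simp_all; omega)
        (fun a b => by simp [le_total]) H.toList
      simpa [List.Pairwise] using this
    refine ⟨l, hnd, hfin, ?_⟩
    intro i hi
    set e := l.get ⟨i, hi⟩ with he
    have heH : e ∈ H := by rw [← hfin]; exact List.mem_toFinset.mpr (List.get_mem l ⟨i, hi⟩)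
    obtain ⟨w, hw1, hw2⟩ := hcert e heH
    -- key: any H-edge with strictly smaller measure than e lies in take i
    have key : ∀ a ∈ H, m a < m e → a ∈ (l.take i).toFinset := by
      intro a haH hma
      have : a ∈ l := by rw [← List.mem_toFinset, hfin]; exact haH
      obtain ⟨j, hj, hja⟩ := List.mem_iff_getElem.mp this
      have hji : j < i := by
        by_contra hn
        push_neg at hn
        rcases eq_or_lt_of_le hn with h | h
        · have hae : a = e := by rw [← hja, he]; simp [h]
          rw [hae] at hma; exact lt_irrefl _ hma
        · have hrel := List.pairwise_iff_getElem.mp hsorted i j hi hj h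
          rw [hja] at hrel
          have : m e ≤ m a := by simpa [he, List.get_eq_getElem] using hrel
          omega
      have hlen : j < (l.take i).length := by simp [List.length_take]; omega
      have hgt : (l.take i)[j]'hlen = a := by rw [List.getElem_take]; exact hja
      exact List.mem_toFinset.mpr (hgt ▸ List.getElem_mem hlen)
    have hfuw : f e.1 < f w := hdag _ hw1
    have hfwv : f w < f e.2 := hdag _ hw2
    refine ⟨w, ?_, ?_⟩
    · rcases Finset.mem_union.mp hw1 with h | h
      · exact Finset.mem_union_left _ h
      · refine Finset.mem_union_right _ (key _ h ?_)
        simp only [hm]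
        omega
    · rcases Finset.mem_union.mp hw2 with h | h
      · exact Finset.mem_union_left _ h
      · refine Finset.mem_union_right _ (key _ h ?_)
        simp only [hm]
        omega
  · rintro ⟨l, hnd, hfin, hproc⟩
    intro e heH
    have : e ∈ l := by rw [← List.mem_toFinset, hfin]; exact heH
    obtain ⟨i, hi, hie⟩ := List.mem_iff_getElem.mp this
    obtain ⟨w, hw1, hw2⟩ := hproc i hi
    have hsub : E ∪ (l.take i).toFinset ⊆ E ∪ H := by
      apply Finset.union_subset_union_right
      rw [← hfin]
      intro x hx
      exact List.mem_toFinset.mpr (List.mem_of_mem_take (List.mem_toFinset.mp hx))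
    rw [List.get_eq_getElem, hie] at hw1 hw2
    exact ⟨w, hsub hw1, hsub hw2⟩
end

section
/- Let G be a directed graph, H a certified shortcut of G, and suppose (u,v) ∈ H. Then there exists a walk from u to v in G (using only original edges of E) of length at least 2. In particular, u ≠ v when G is a DAG and u reaches v in G. -/
/-- A walk in the edge set `F`. -/
def Walk {V : Type*} (F : Set (V × V)) (l : List V) : Prop :=
  List.Chain' (fun a b => (a, b) ∈ F) l

/-- A walk from `s` to `t`. -/
def WalkFrom {V : Type*} (F : Set (V × V)) (l : List V) (s t : V) : Prop :=
  Walk F l ∧ l.head? = some s ∧ l.getLast? = some t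

/-- Reachability in the edge set `F`. -/
def Reach {V : Type*} (F : Set (V × V)) (u v : V) : Prop :=
  Relation.ReflTransGen (fun a b => (a, b) ∈ F) u v

lemma walkFrom_append {V : Type*} {E : Set (V × V)} {l1 l2 : List V} {u w v : V}
    (h1 : WalkFrom E l1 u w) (h2 : WalkFrom E l2 w v) :
    WalkFrom E (l1 ++ l2.tail) u v := by
  obtain ⟨c1, hh1, hl1⟩ := h1
  obtain ⟨c2, hh2, hl2⟩ := h2
  cases l2 with
  | nil => simp at hh2
  | cons a t =>
    simp only [List.head?_cons, Option.some.injEq] at hh2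
    subst hh2
    cases t with
    | nil =>
      simp only [List.getLast?_singleton, Option.some.injEq] at hl2
      subst hl2
      simpa using ⟨c1, hh1, hl1⟩
    | cons b t' =>
      refine ⟨?_, ?_, ?_⟩
      · apply List.IsChain.append c1 c2.tail
        intro x hx y hy
        rw [hl1] at hx
        simp only [Option.mem_def, Option.some.injEq] at hx
        subst hx
        simp only [List.tail_cons, List.head?_cons, Option.mem_def,
          Option.some.injEq] at hy
        subst hy
        exact (List.isChain_cons_cons.mp c2).1
      · cases l1 with
        | nil => simp at hh1
        | cons _ _ => simpa using hh1
      · rw [List.getLast?_append]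
        simpa using hl2

/-- If `H` is a certified shortcut of a DAG `G` and `(u,v) ∈ H` with `u` reaching `v`
in `G`, then there is a walk from `u` to `v` in `G` using only original edges and
having at least 2 edges; in particular `u ≠ v`. -/
theorem certified_edge_gives_long_walk
    {V : Type*} (E H : Set (V × V)) (u v : V)
    (hcert : ∀ e ∈ H, ∃ w : V, ((e.1, w) ∈ E ∪ H) ∧ ((w, e.2) ∈ E ∪ H))
    (f : V → ℕ) (hdag : ∀ e ∈ E ∪ H, f e.1 < f e.2)
    (huv : (u, v) ∈ H) (hreach : Reach E u v) :
    (∃ l : List V, WalkFrom E l u v ∧ 3 ≤ l.length) ∧ u ≠ v := by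
  have key : ∀ n a b, f b - f a = n → (a, b) ∈ E ∪ H →
      ∃ l : List V, WalkFrom E l a b ∧ 2 ≤ l.length := by
    intro n
    induction n using Nat.strong_induction_on with
    | _ n ih =>
      intro a b hn hab
      rcases hab with hE | hH
      · exact ⟨[a, b], ⟨List.isChain_pair.mpr hE, rfl, rfl⟩, by simp⟩
      · obtain ⟨w, h1, h2⟩ := hcert (a, b) hH
        have hab' : f a < f b := hdag (a, b) (Or.inr hH)
        have haw : f a < f w := hdag (a, w) h1
        have hwb : f w < f b := hdag (w, b) h2
        obtain ⟨l1, hw1, hlen1⟩ := ih (f w - f a) (by omega) a w rfl h1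
        obtain ⟨l2, hw2, hlen2⟩ := ih (f b - f w) (by omega) w b rfl h2
        refine ⟨l1 ++ l2.tail, walkFrom_append hw1 hw2, ?_⟩
        have : 1 ≤ l2.tail.length := by
          cases l2 with
          | nil => simp [WalkFrom] at hw2
          | cons c t =>
            cases t with
            | nil =>
              exfalso
              obtain ⟨_, hh, hl⟩ := hw2
              simp at hlen2
            | cons d t' => simp
        simp only [List.length_append]
        omega
  have hne : u ≠ v := by
    have := hdag (u, v) (Or.inr huv)
    intro h; subst h; simp at this
  obtain ⟨w, h1, h2⟩ := hcert (u, v) huv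
  have huv' : f u < f v := hdag (u, v) (Or.inr huv)
  have huw : f u < f w := hdag (u, w) h1
  have hwv : f w < f v := hdag (w, v) h2
  obtain ⟨l1, hw1, hlen1⟩ := key (f w - f u) u w rfl h1
  obtain ⟨l2, hw2, hlen2⟩ := key (f v - f w) w v rfl h2
  refine ⟨⟨l1 ++ l2.tail, walkFrom_append hw1 hw2, ?_⟩, hne⟩
  have : 1 ≤ l2.tail.length := by
    cases l2 with
    | nil => simp [WalkFrom] at hw2
    | cons c t =>
      cases t with
      | nil => simp at hlen2
      | cons d t' => simp
  simp only [List.length_append]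
  omega
end

section
/- Let r > 0 and let 𝒱(r) be the set of vertices of the convex hull of the integer points in the closed disk of radius r around the origin in ℝ², restricted to points with both coordinates positive. Then for any D' ≤ D, any v ∈ 𝒱(r), and any multiset v_1, ..., v_{D'} of elements of 𝒱(r) with D·v = v_1 + ... + v_{D'}, it must be that D' = D and v_i = v for all i. -/
/-- The set of integer points in the closed disk of radius `r` around the origin in `ℝ²`. -/
def latticeDisk (r : ℝ) : Set (ℝ × ℝ) :=
  {p | (∃ a b : ℤ, p = ((a : ℝ), (b : ℝ))) ∧ p.1 ^ 2 + p.2 ^ 2 ≤ r ^ 2}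

/-- `𝒱(r)`: the vertices (extreme points) of the convex hull of the integer points of the
disk of radius `r`, restricted to points with both coordinates positive. -/
def hullVertices (r : ℝ) : Set (ℝ × ℝ) :=
  {p ∈ Set.extremePoints ℝ (convexHull ℝ (latticeDisk r)) | 0 < p.1 ∧ 0 < p.2}

/-- Strict convexity: if `D·v` is a sum of `D' ≤ D` elements of `𝒱(r)` for a vertex
`v ∈ 𝒱(r)`, then `D' = D` and every summand equals `v`. -/
theorem hullVertices_sum_rigidity (r : ℝ) (hr : 0 < r) (D D' : ℕ) (hD : 0 < D)
    (hD' : D' ≤ D) (v : ℝ × ℝ) (hv : v ∈ hullVertices r)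
    (g : Fin D' → ℝ × ℝ) (hg : ∀ i, g i ∈ hullVertices r)
    (hsum : (D : ℝ) • v = ∑ i, g i) :
    D' = D ∧ ∀ i, g i = v := by
  obtain ⟨hvext, hv1, hv2⟩ := hv
  set s := convexHull ℝ (latticeDisk r) with hs
  have hconvs : Convex ℝ s := convex_convexHull ℝ _
  obtain ⟨hvs, hconvd⟩ := hconvs.mem_extremePoints_iff_convex_diff.mp hvext
  have h0 : (0 : ℝ × ℝ) ∈ s := by
    apply subset_convexHull ℝ _
    refine ⟨⟨0, 0, by norm_num [Prod.ext_iff]⟩, by simp; positivity⟩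
  have hv0 : v ≠ 0 := by
    intro h
    rw [h] at hv1
    exact lt_irrefl _ hv1
  set f : Fin D → ℝ × ℝ := fun i => if h : (i : ℕ) < D' then g ⟨i, h⟩ else 0 with hf
  have hfs : ∀ i, f i ∈ s := by
    intro i
    rw [hf]
    dsimp only
    split
    · exact ((hg _).1).1
    · exact h0
  have hfsum : ∑ i, f i = (D : ℝ) • v := by
    rw [hsum]
    calc ∑ i : Fin D, f i
        = ∑ i ∈ Finset.range D, (if h : i < D' then g ⟨i, h⟩ else 0) :=
          Fin.sum_univ_eq_sum_range (fun i => if h : i < D' then g ⟨i, h⟩ else 0) D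
      _ = ∑ i ∈ Finset.range D', (if h : i < D' then g ⟨i, h⟩ else 0) := by
          refine (Finset.sum_subset (Finset.range_subset_range.mpr hD') ?_).symm
          intro x _ hx
          rw [Finset.mem_range] at hx
          exact dif_neg hx
      _ = ∑ i : Fin D', g i := by
          rw [← Fin.sum_univ_eq_sum_range]
          refine Finset.sum_congr rfl fun i _ => ?_
          simp [i.isLt]
  have hall : ∀ i, f i = v := by
    by_contra hcon
    push_neg at hcon
    obtain ⟨j, hj⟩ := hcon
    set T : Finset (Fin D) := Finset.univ.filter (fun i => f i ≠ v) with hT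
    have hjT : j ∈ T := by simp [hT, hj]
    have hTpos : 0 < T.card := Finset.card_pos.mpr ⟨j, hjT⟩
    have hTc : ∀ i ∈ Tᶜ, f i = v := by
      intro i hi
      simp [hT] at hi
      exact hi
    have hsumTc : ∑ i ∈ Tᶜ, f i = (Tᶜ.card : ℝ) • v := by
      rw [Finset.sum_congr rfl hTc, Finset.sum_const, Nat.cast_smul_eq_nsmul ℝ]
    have hcard : (T.card : ℝ) + (Tᶜ.card : ℝ) = (D : ℝ) := by
      rw [← Nat.cast_add]
      norm_cast
      rw [Finset.card_add_card_compl, Fintype.card_fin]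
    have hsumT : ∑ i ∈ T, f i = (T.card : ℝ) • v := by
      have hsplit : ∑ i ∈ T, f i + ∑ i ∈ Tᶜ, f i = (D : ℝ) • v := by
        rw [Finset.sum_add_sum_compl, hfsum]
      rw [hsumTc] at hsplit
      have h4 : (T.card : ℝ) = (D : ℝ) - (Tᶜ.card : ℝ) := by linarith
      rw [h4, sub_smul, eq_sub_iff_add_eq]
      exact hsplit
    have hmem : ∑ i ∈ T, ((T.card : ℝ)⁻¹) • f i ∈ s \ {v} := by
      apply hconvd.sum_mem
      · intro i _; positivity
      · rw [Finset.sum_const, nsmul_eq_mul]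
        field_simp
      · intro i hi
        simp [hT] at hi
        exact ⟨hfs i, hi⟩
    rw [← Finset.smul_sum, hsumT, smul_smul,
      inv_mul_cancel₀ (by positivity : (T.card : ℝ) ≠ 0), one_smul] at hmem
    exact hmem.2 rfl
  have hDD : D' = D := by
    by_contra hne
    have hlt : D' < D := lt_of_le_of_ne hD' hne
    have := hall ⟨D', hlt⟩
    rw [hf] at this
    simp at this
    exact hv0 this.symm
  refine ⟨hDD, fun i => ?_⟩
  have hlt : (i : ℕ) < D := lt_of_lt_of_le i.isLt hD'
  have := hall ⟨i, hlt⟩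
  rw [hf] at this
  simpa [i.isLt] using this
end

section
/- Let G = (V,E) be a directed graph with a designated pivot vertex x. Let R⁺ be the set of vertices reachable from x and R⁻ the set of vertices that can reach x. Then the edge set S = {(x,v) : v ∈ R⁺} ∪ {(v,x) : v ∈ R⁻} is a certified shortcut of G: adding S preserves the transitive closure, and every edge of S has a certificate in E ∪ S. -/
namespace Reach

variable {V : Type*} {E : Set (V × V)} {u v : V}

theorem edge_or_exists_last_edge (h : Reach E u v) (hne : v ≠ u) :
    (u, v) ∈ E ∨ ∃ w, (Reach E u w ∧ w ≠ u) ∧ (w, v) ∈ E := by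
  obtain rfl | ⟨w, huw, hwv⟩ := h.cases_tail
  · exact absurd rfl hne
  by_cases hwu : w = u
  · exact .inl (hwu ▸ hwv)
  · exact .inr ⟨w, ⟨huw, hwu⟩, hwv⟩

theorem edge_or_exists_first_edge (h : Reach E u v) (hne : u ≠ v) :
    (u, v) ∈ E ∨ ∃ w, (u, w) ∈ E ∧ (Reach E w v ∧ w ≠ v) := by
  obtain rfl | ⟨w, huw, hwv⟩ := h.cases_head
  · exact absurd rfl hne
  by_cases hwv' : w = v
  · exact .inl (hwv' ▸ huw)
  · exact .inr ⟨w, huw, hwv, hwv'⟩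

end Reach

/-- The pivot star `S = {(x,v) : v ∈ R⁺} ∪ {(v,x) : v ∈ R⁻}` is a certified shortcut:
every edge of `S` respects reachability in `G`, and every edge of `S` is either an
original edge or has a length-2 certificate in `E ∪ S`. -/
theorem pivot_star_is_certified_shortcut {V : Type*} (E : Set (V × V)) (x : V) :
    let Rplus : Set V := {v | Reach E x v ∧ v ≠ x}
    let Rminus : Set V := {v | Reach E v x ∧ v ≠ x}
    let S : Set (V × V) := {e | (e.1 = x ∧ e.2 ∈ Rplus) ∨ (e.2 = x ∧ e.1 ∈ Rminus)}
    (∀ e ∈ S, Reach E e.1 e.2) ∧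
      (∀ e ∈ S, e ∈ E ∨ ∃ w : V, (e.1, w) ∈ E ∪ S ∧ (w, e.2) ∈ E ∪ S) := by
  intro Rplus Rminus S
  refine ⟨?_, ?_⟩
  · rintro ⟨a, b⟩ (⟨rfl, hreach, -⟩ | ⟨rfl, hreach, -⟩) <;> exact hreach
  · rintro ⟨a, b⟩ (⟨rfl, hreach, hne⟩ | ⟨rfl, hreach, hne⟩)
    · obtain hedge | ⟨w, hw, hwb⟩ := hreach.edge_or_exists_last_edge hne
      · exact .inl hedge
      · exact .inr ⟨w, .inr (.inl ⟨rfl, hw⟩), .inl hwb⟩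
    · obtain hedge | ⟨w, haw, hw⟩ := hreach.edge_or_exists_first_edge hne
      · exact .inl hedge
      · exact .inr ⟨w, .inl haw, .inr (.inr ⟨rfl, hw⟩)⟩
end

section
/- Let G be a DAG with n vertices. For any certified shortcut H of G, there exist k = O(log n) sets H_1, ..., H_k with H ⊆ E ∪ H_1 ∪ ... ∪ H_k and Σ|H_i| = O(|H| log n), such that every edge of H_i has a certificate (two edges forming a length-2 path) in E ∪ H_1 ∪ ... ∪ H_{i-1}. -/
open Finset

namespace CSLDR

variable {V : Type} [DecidableEq V]

def key (r : V → ℕ) (a : V × V) : ℕ := r a.1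

/-- `S` is (the edge set of) a monotone path of `E`-edges from `x` to `y`,
with edges keyed by the rank of their source. -/
structure GoodPath (E : Finset (V × V)) (r : V → ℕ) (S : Finset (V × V))
    (x y : V) : Prop where
  subE : ∀ a ∈ S, a ∈ E
  nonempty : S.Nonempty
  lb : ∀ a ∈ S, r x ≤ key r a
  ub : ∀ a ∈ S, key r a < r y
  inj : ∀ a ∈ S, ∀ b ∈ S, key r a = key r b → a = b
  min_src : ∀ a ∈ S, (∀ c ∈ S, key r a ≤ key r c) → a.1 = x
  max_tgt : ∀ a ∈ S, (∀ c ∈ S, key r c ≤ key r a) → a.2 = y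
  link : ∀ a ∈ S, ∀ b ∈ S, key r a < key r b →
    (∀ c ∈ S, key r c ≤ key r a ∨ key r b ≤ key r c) → a.2 = b.1

theorem GoodPath.single {E : Finset (V × V)} {r : V → ℕ} {x y : V}
    (hmem : (x, y) ∈ E) (hxy : r x < r y) :
    GoodPath E r {(x, y)} x y where
  subE a ha := by simp only [mem_singleton] at ha; subst ha; exact hmem
  nonempty := ⟨_, mem_singleton_self _⟩
  lb a ha := by simp only [mem_singleton] at ha; subst ha; exact le_refl _
  ub a ha := by simp only [mem_singleton] at ha; subst ha; exact hxy
  inj a ha b hb _ := by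
    simp only [mem_singleton] at ha hb; subst ha; subst hb; rfl
  min_src a ha _ := by simp only [mem_singleton] at ha; subst ha; rfl
  max_tgt a ha _ := by simp only [mem_singleton] at ha; subst ha; rfl
  link a ha b hb hab _ := by
    simp only [mem_singleton] at ha hb; subst ha; subst hb; omega

theorem GoodPath.union {E : Finset (V × V)} {r : V → ℕ} {S₁ S₂ : Finset (V × V)}
    {x w y : V} (h₁ : GoodPath E r S₁ x w) (h₂ : GoodPath E r S₂ w y) :
    GoodPath E r (S₁ ∪ S₂) x y := by
  -- basic facts
  have hxw : r x < r w := by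
    obtain ⟨a, ha⟩ := h₁.nonempty
    exact lt_of_le_of_lt (h₁.lb a ha) (h₁.ub a ha)
  have hwy : r w < r y := by
    obtain ⟨a, ha⟩ := h₂.nonempty
    exact lt_of_le_of_lt (h₂.lb a ha) (h₂.ub a ha)
  have hcase : ∀ a ∈ S₁ ∪ S₂, (a ∈ S₁ ∧ key r a < r w) ∨ (a ∈ S₂ ∧ r w ≤ key r a) := by
    intro a ha
    rcases mem_union.mp ha with h | h
    · exact Or.inl ⟨h, h₁.ub a h⟩
    · exact Or.inr ⟨h, h₂.lb a h⟩
  constructor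
  · intro a ha
    rcases hcase a ha with ⟨h, _⟩ | ⟨h, _⟩
    exacts [h₁.subE a h, h₂.subE a h]
  · obtain ⟨a, ha⟩ := h₁.nonempty; exact ⟨a, mem_union_left _ ha⟩
  · intro a ha
    rcases hcase a ha with ⟨h, _⟩ | ⟨h, _⟩
    · exact h₁.lb a h
    · exact le_trans (le_of_lt hxw) (h₂.lb a h)
  · intro a ha
    rcases hcase a ha with ⟨h, _⟩ | ⟨h, _⟩
    · exact lt_trans (h₁.ub a h) hwy
    · exact h₂.ub a h
  · intro a ha b hb hk
    rcases hcase a ha with ⟨h, hk1⟩ | ⟨h, hk1⟩ <;>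
      rcases hcase b hb with ⟨h', hk2⟩ | ⟨h', hk2⟩
    · exact h₁.inj a h b h' hk
    · omega
    · omega
    · exact h₂.inj a h b h' hk
  · intro a ha hmin
    rcases hcase a ha with ⟨h, hk1⟩ | ⟨h, hk1⟩
    · exact h₁.min_src a h (fun c hc => hmin c (mem_union_left _ hc))
    · exfalso
      obtain ⟨c, hc⟩ := h₁.nonempty
      have := hmin c (mem_union_left _ hc)
      have := h₁.ub c hc
      omega
  · intro a ha hmax
    rcases hcase a ha with ⟨h, hk1⟩ | ⟨h, hk1⟩
    · exfalso
      obtain ⟨c, hc⟩ := h₂.nonempty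
      have := hmax c (mem_union_right _ hc)
      have := h₂.lb c hc
      omega
    · exact h₂.max_tgt a h (fun c hc => hmax c (mem_union_right _ hc))
  · intro a ha b hb hab hconsec
    rcases hcase a ha with ⟨h, hk1⟩ | ⟨h, hk1⟩ <;>
      rcases hcase b hb with ⟨h', hk2⟩ | ⟨h', hk2⟩
    · -- both in S₁
      refine h₁.link a h b h' hab (fun c hc => ?_)
      exact hconsec c (mem_union_left _ hc)
    · -- a in S₁, b in S₂ : a is max of S₁, b is min of S₂
      have ha2 : a.2 = w := by
        refine h₁.max_tgt a h (fun c hc => ?_)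
        rcases hconsec c (mem_union_left _ hc) with h'' | h''
        · exact h''
        · have := h₁.ub c hc; omega
      have hb1 : b.1 = w := by
        refine h₂.min_src b h' (fun c hc => ?_)
        rcases hconsec c (mem_union_right _ hc) with h'' | h''
        · have := h₂.lb c hc; omega
        · exact h''
      rw [ha2, hb1]
    · omega
    · refine h₂.link a h b h' hab (fun c hc => ?_)
      exact hconsec c (mem_union_right _ hc)

end CSLDR
section PartB
open Finset
namespace CSLDR

variable {V : Type} [DecidableEq V]

/-- Recursive expansion of an edge into a path of `E`-edges, using the
certificate-midpoint function `cw`. -/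
def Spath (E : Finset (V × V)) (cw : V × V → V) : ℕ → V × V → Finset (V × V)
  | 0, e => {e}
  | fuel + 1, e =>
    if e ∈ E then {e}
    else Spath E cw fuel (e.1, cw e) ∪ Spath E cw fuel (cw e, e.2)

section Spath

variable {E H : Finset (V × V)} {r : V → ℕ} {cw : V × V → V}

theorem Spath_good
    (hr : ∀ e ∈ E ∪ H, r e.1 < r e.2)
    (hcw : ∀ e ∈ H, (e.1, cw e) ∈ E ∪ H ∧ (cw e, e.2) ∈ E ∪ H) :
    ∀ fuel, ∀ e ∈ E ∪ H, r e.2 ≤ r e.1 + fuel →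
      GoodPath E r (Spath E cw fuel e) e.1 e.2 := by
  intro fuel
  induction fuel with
  | zero =>
    intro e he hgap
    exact absurd (hr e he) (by omega)
  | succ fuel ih =>
    intro e he hgap
    by_cases heE : e ∈ E
    · rw [Spath, if_pos heE]
      have := GoodPath.single (x := e.1) (y := e.2) (r := r) (by simpa using heE)
        (hr e he)
      simpa using this
    · have heH : e ∈ H := by
        exact (mem_union.mp he).resolve_left heE
      obtain ⟨hc1, hc2⟩ := hcw e heH
      have hw1 : r e.1 < r (cw e) := hr _ hc1
      have hw2 : r (cw e) < r e.2 := hr _ hc2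
      rw [Spath, if_neg heE]
      exact GoodPath.union
        (ih (e.1, cw e) hc1 (by simp; omega))
        (ih (cw e, e.2) hc2 (by simp; omega))

theorem Spath_stab
    (hr : ∀ e ∈ E ∪ H, r e.1 < r e.2)
    (hcw : ∀ e ∈ H, (e.1, cw e) ∈ E ∪ H ∧ (cw e, e.2) ∈ E ∪ H) :
    ∀ fuel, ∀ e ∈ E ∪ H, r e.2 ≤ r e.1 + fuel →
      Spath E cw (fuel + 1) e = Spath E cw fuel e := by
  intro fuel
  induction fuel with
  | zero =>
    intro e he hgap
    exact absurd (hr e he) (by omega)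
  | succ fuel ih =>
    intro e he hgap
    by_cases heE : e ∈ E
    · rw [Spath, if_pos heE, Spath, if_pos heE]
    · have heH : e ∈ H := by
        exact (mem_union.mp he).resolve_left heE
      obtain ⟨hc1, hc2⟩ := hcw e heH
      have hw1 : r e.1 < r (cw e) := hr _ hc1
      have hw2 : r (cw e) < r e.2 := hr _ hc2
      have hL : Spath E cw (fuel + 1 + 1) e
          = Spath E cw (fuel + 1) (e.1, cw e) ∪ Spath E cw (fuel + 1) (cw e, e.2) := by
        rw [Spath, if_neg heE]
      have hR : Spath E cw (fuel + 1) e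
          = Spath E cw fuel (e.1, cw e) ∪ Spath E cw fuel (cw e, e.2) := by
        rw [Spath, if_neg heE]
      rw [hL, hR, ih (e.1, cw e) hc1 (by simp; omega), ih (cw e, e.2) hc2 (by simp; omega)]

theorem Spath_ge
    (hr : ∀ e ∈ E ∪ H, r e.1 < r e.2)
    (hcw : ∀ e ∈ H, (e.1, cw e) ∈ E ∪ H ∧ (cw e, e.2) ∈ E ∪ H) :
    ∀ d fuel, ∀ e ∈ E ∪ H, r e.2 ≤ r e.1 + fuel →
      Spath E cw (fuel + d) e = Spath E cw fuel e := by
  intro d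
  induction d with
  | zero => intro fuel e _ _; rfl
  | succ d ih =>
    intro fuel e he hgap
    rw [show fuel + (d + 1) = (fuel + d) + 1 by omega,
      Spath_stab hr hcw (fuel + d) e he (by omega), ih fuel e he hgap]

/-- unfolding at a fixed large fuel value -/
theorem Spath_unfold
    (hr : ∀ e ∈ E ∪ H, r e.1 < r e.2)
    (hcw : ∀ e ∈ H, (e.1, cw e) ∈ E ∪ H ∧ (cw e, e.2) ∈ E ∪ H)
    {n : ℕ} (hn : ∀ e ∈ E ∪ H, r e.2 ≤ r e.1 + n ∧ r e.2 ≤ n)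
    {e : V × V} (heH : e ∈ H) (heE : e ∉ E) :
    Spath E cw n e = Spath E cw n (e.1, cw e) ∪ Spath E cw n (cw e, e.2) := by
  have he : e ∈ E ∪ H := mem_union_right _ heH
  obtain ⟨hc1, hc2⟩ := hcw e heH
  have hw1 : r e.1 < r (cw e) := hr _ hc1
  have hw2 : r (cw e) < r e.2 := hr _ hc2
  have hgap : r e.2 ≤ r e.1 + n := (hn e he).1
  have hn1 : 1 ≤ n := by have := hr e he; omega
  obtain ⟨m, rfl⟩ : ∃ m, n = m + 1 := ⟨n - 1, by omega⟩
  rw [Spath, if_neg heE]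
  have h1 : r (e.1, cw e).2 ≤ r (e.1, cw e).1 + m := by
    simp only
    have := (hn e he).2
    have := (hn _ hc1).2
    omega
  have h2 : r (cw e, e.2).2 ≤ r (cw e, e.2).1 + m := by
    simp only
    have := (hn _ hc2).2
    omega
  rw [show m + 1 = m + 1 from rfl, Spath_stab hr hcw m _ hc1 h1,
    Spath_stab hr hcw m _ hc2 h2]

end Spath

end CSLDR
end PartB
section PartC
set_option linter.unusedSectionVars false
open Finset
namespace CSLDR

variable {V : Type} [DecidableEq V]

/-- edges of `S` whose key lies in the dyadic interval `[j·2^s, (j+1)·2^s)`. -/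
def DS (r : V → ℕ) (S : Finset (V × V)) (s j : ℕ) : Finset (V × V) :=
  S.filter (fun a => j * 2 ^ s ≤ key r a ∧ key r a < j * 2 ^ s + 2 ^ s)

def Lhalf (r : V → ℕ) (S : Finset (V × V)) (s j : ℕ) : Finset (V × V) :=
  S.filter (fun a => j * 2 ^ s ≤ key r a ∧ key r a < j * 2 ^ s + 2 ^ (s - 1))

def Rhalf (r : V → ℕ) (S : Finset (V × V)) (s j : ℕ) : Finset (V × V) :=
  S.filter (fun a => j * 2 ^ s + 2 ^ (s - 1) ≤ key r a ∧ key r a < j * 2 ^ s + 2 ^ s)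

def Branching (r : V → ℕ) (S : Finset (V × V)) (s j : ℕ) : Prop :=
  (Lhalf r S s j).Nonempty ∧ (Rhalf r S s j).Nonempty

instance (r : V → ℕ) (S : Finset (V × V)) (s j : ℕ) :
    Decidable (Branching r S s j) := by unfold Branching; infer_instance

variable {r : V → ℕ} {S : Finset (V × V)}

theorem Lhalf_subset_DS {s j : ℕ} : Lhalf r S s j ⊆ DS r S s j := by
  intro a ha
  rw [Lhalf, mem_filter] at ha
  rw [DS, mem_filter]
  have h2 : (2:ℕ) ^ (s - 1) ≤ 2 ^ s := Nat.pow_le_pow_right (by norm_num) (by omega)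
  exact ⟨ha.1, ha.2.1, lt_of_lt_of_le ha.2.2 (Nat.add_le_add_left h2 _)⟩

theorem Rhalf_subset_DS {s j : ℕ} : Rhalf r S s j ⊆ DS r S s j := by
  intro a ha
  rw [Rhalf, mem_filter] at ha
  rw [DS, mem_filter]
  exact ⟨ha.1, le_trans (Nat.le_add_right _ _) ha.2.1, ha.2.2⟩

theorem DS_subset {s j : ℕ} : DS r S s j ⊆ S := filter_subset _ _

theorem DS_eq_union {s j : ℕ} : DS r S s j = Lhalf r S s j ∪ Rhalf r S s j := by
  ext a
  have h2 : (2:ℕ) ^ (s - 1) ≤ 2 ^ s := Nat.pow_le_pow_right (by norm_num) (by omega)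
  have hp : (0:ℕ) < 2 ^ (s - 1) := pow_pos (by norm_num) _
  simp only [DS, Lhalf, Rhalf, mem_union, mem_filter]
  constructor
  · rintro ⟨ha, h1, h2'⟩
    by_cases hc : key r a < j * 2 ^ s + 2 ^ (s - 1)
    · exact Or.inl ⟨ha, h1, hc⟩
    · exact Or.inr ⟨ha, by omega, h2'⟩
  · rintro (⟨ha, h1, hc⟩ | ⟨ha, hc, h2'⟩)
    · exact ⟨ha, h1, by omega⟩
    · exact ⟨ha, by omega, h2'⟩

theorem Branching.one_le {s j : ℕ} (h : Branching r S s j) : 1 ≤ s := by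
  by_contra hs
  obtain ⟨b, hb⟩ := h.2
  rw [Rhalf, mem_filter] at hb
  have : s = 0 := by omega
  subst this
  simp at hb
  omega

theorem Lhalf_eq_DS {s j : ℕ} (hs : 1 ≤ s) :
    Lhalf r S s j = DS r S (s - 1) (2 * j) := by
  have h2 : (2:ℕ) ^ s = 2 ^ (s - 1) * 2 := by
    rw [← pow_succ]; congr 1; omega
  have e1 : 2 * j * 2 ^ (s - 1) = j * 2 ^ s := by rw [h2]; ring
  have e2 : (2:ℕ) ^ s = 2 ^ (s - 1) + 2 ^ (s - 1) := by omega
  ext a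
  simp only [Lhalf, DS, mem_filter]
  exact and_congr Iff.rfl (by omega)

theorem Rhalf_eq_DS {s j : ℕ} (hs : 1 ≤ s) :
    Rhalf r S s j = DS r S (s - 1) (2 * j + 1) := by
  have h2 : (2:ℕ) ^ s = 2 ^ (s - 1) * 2 := by
    rw [← pow_succ]; congr 1; omega
  have e1 : (2 * j + 1) * 2 ^ (s - 1) = j * 2 ^ s + 2 ^ (s - 1) := by rw [h2]; ring
  have e2 : (2:ℕ) ^ s = 2 ^ (s - 1) + 2 ^ (s - 1) := by omega
  ext a
  simp only [Rhalf, DS, mem_filter]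
  exact and_congr Iff.rfl (by omega)

/-- first vertex of the minimum-key edge of `T` -/
noncomputable def firstV (r : V → ℕ) (T : Finset (V × V)) (v0 : V) : V :=
  if h : T.Nonempty then (T.exists_min_image (key r) h).choose.1 else v0

/-- last vertex of the maximum-key edge of `T` -/
noncomputable def lastV (r : V → ℕ) (T : Finset (V × V)) (v0 : V) : V :=
  if h : T.Nonempty then (T.exists_max_image (key r) h).choose.2 else v0

noncomputable def halfEdge (r : V → ℕ) (T : Finset (V × V)) (v0 : V) : V × V :=
  (firstV r T v0, lastV r T v0)

noncomputable def edgeOf (r : V → ℕ) (S : Finset (V × V)) (s j : ℕ) (v0 : V) :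
    V × V :=
  halfEdge r (DS r S s j) v0

theorem firstV_eq {T : Finset (V × V)} {v0 : V}
    (hinj : ∀ a ∈ T, ∀ b ∈ T, key r a = key r b → a = b)
    {a : V × V} (ha : a ∈ T) (hmin : ∀ c ∈ T, key r a ≤ key r c) :
    firstV r T v0 = a.1 := by
  have h : T.Nonempty := ⟨a, ha⟩
  rw [firstV, dif_pos h]
  obtain ⟨hb, hbmin⟩ := (T.exists_min_image (key r) h).choose_spec
  rw [hinj _ hb _ ha (le_antisymm (hbmin a ha) (hmin _ hb))]

theorem lastV_eq {T : Finset (V × V)} {v0 : V}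
    (hinj : ∀ a ∈ T, ∀ b ∈ T, key r a = key r b → a = b)
    {a : V × V} (ha : a ∈ T) (hmax : ∀ c ∈ T, key r c ≤ key r a) :
    lastV r T v0 = a.2 := by
  have h : T.Nonempty := ⟨a, ha⟩
  rw [lastV, dif_pos h]
  obtain ⟨hb, hbmax⟩ := (T.exists_max_image (key r) h).choose_spec
  rw [hinj _ hb _ ha (le_antisymm (hmax _ hb) (hbmax a ha))]

theorem halfEdge_singleton {v0 : V} (a : V × V) :
    halfEdge r {a} v0 = a := by
  rw [halfEdge]
  rw [firstV_eq (a := a) (fun x hx y hy _ => by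
        simp only [mem_singleton] at hx hy; rw [hx, hy])
      (mem_singleton_self a) (fun c hc => by
        simp only [mem_singleton] at hc; rw [hc]),
    lastV_eq (a := a) (fun x hx y hy _ => by
        simp only [mem_singleton] at hx hy; rw [hx, hy])
      (mem_singleton_self a) (fun c hc => by
        simp only [mem_singleton] at hc; rw [hc])]

/-- descend to a branching (or trivial) dyadic interval with the same edge set -/
theorem descend (hinj : ∀ a ∈ S, ∀ b ∈ S, key r a = key r b → a = b) :
    ∀ s j, 2 ≤ (DS r S s j).card →
      ∃ s' j', s' ≤ s ∧ Branching r S s' j' ∧ DS r S s' j' = DS r S s j := by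
  intro s
  induction s with
  | zero =>
    intro j hcard
    exfalso
    obtain ⟨a, ha, b, hb, hab⟩ :=
      one_lt_card.mp (show 1 < (DS r S 0 j).card by omega)
    simp only [DS, mem_filter] at ha hb
    refine hab (hinj a ha.1 b hb.1 ?_)
    simp only [pow_zero] at ha hb
    omega
  | succ s ih =>
    intro j hcard
    by_cases hbr : Branching r S (s + 1) j
    · exact ⟨s + 1, j, le_refl _, hbr, rfl⟩
    · rw [Branching, not_and_or] at hbr
      have hsplit := DS_eq_union (r := r) (S := S) (s := s + 1) (j := j)
      rcases hbr with h | h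
      · -- left empty: everything in the right half
        rw [not_nonempty_iff_eq_empty] at h
        have hDS : DS r S (s + 1) j = DS r S s (2 * j + 1) := by
          rw [hsplit, h, empty_union, Rhalf_eq_DS (by omega)]
          norm_num
        obtain ⟨s', j', hle, hbr', heq⟩ := ih (2 * j + 1) (by rw [← hDS]; exact hcard)
        exact ⟨s', j', by omega, hbr', by rw [heq, ← hDS]⟩
      · rw [not_nonempty_iff_eq_empty] at h
        have hDS : DS r S (s + 1) j = DS r S s (2 * j) := by
          rw [hsplit, h, union_empty, Lhalf_eq_DS (by omega)]
          norm_num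
        obtain ⟨s', j', hle, hbr', heq⟩ := ih (2 * j) (by rw [← hDS]; exact hcard)
        exact ⟨s', j', by omega, hbr', by rw [heq, ← hDS]⟩

end CSLDR
end PartC
section PartD
set_option linter.unusedSectionVars false
open Finset
namespace CSLDR

variable {V : Type} [DecidableEq V]

theorem Spath_E {E : Finset (V × V)} {cw : V × V → V} {e : V × V}
    (heE : e ∈ E) {fuel : ℕ} (h : 1 ≤ fuel) :
    Spath E cw fuel e = {e} := by
  obtain ⟨m, rfl⟩ : ∃ m, fuel = m + 1 := ⟨fuel - 1, by omega⟩
  rw [Spath, if_pos heE]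

theorem not_branching_singleton {r : V → ℕ} {a : V × V} {s j : ℕ} :
    ¬ Branching r {a} s j := by
  rintro ⟨⟨b, hb⟩, ⟨c, hc⟩⟩
  rw [Lhalf, mem_filter, mem_singleton] at hb
  rw [Rhalf, mem_filter, mem_singleton] at hc
  obtain ⟨rfl, h1, h2⟩ := hb
  obtain ⟨rfl, h3, h4⟩ := hc
  omega

/-- the multiset of (round, edge) pairs of all branching dyadic nodes -/
noncomputable def Nod (r : V → ℕ) (Bd : ℕ) (v0 : V) (S : Finset (V × V)) :
    Finset (ℕ × (V × V)) :=
  ((range (Bd + 1) ×ˢ range (2 ^ Bd)).filter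
      (fun p => Branching r S p.1 p.2)).image
    (fun p => (p.1, edgeOf r S p.1 p.2 v0))

theorem mem_Nod {r : V → ℕ} {Bd : ℕ} {v0 : V} {S : Finset (V × V)}
    {q : ℕ × (V × V)} :
    q ∈ Nod r Bd v0 S ↔
      ∃ s' j', s' < Bd + 1 ∧ j' < 2 ^ Bd ∧ Branching r S s' j' ∧
        q = (s', edgeOf r S s' j' v0) := by
  simp only [Nod, mem_image, mem_filter, mem_product, mem_range, Prod.exists]
  constructor
  · rintro ⟨s', j', ⟨⟨h1, h2⟩, h3⟩, h4⟩
    exact ⟨s', j', h1, h2, h3, h4.symm⟩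
  · rintro ⟨s', j', h1, h2, h3, h4⟩
    exact ⟨s', j', ⟨⟨h1, h2⟩, h3⟩, h4.symm⟩

theorem Nod_singleton {r : V → ℕ} {Bd : ℕ} {v0 : V} {a : V × V} :
    Nod r Bd v0 {a} = ∅ := by
  rw [eq_empty_iff_forall_notMem]
  intro q hq
  obtain ⟨s', j', -, -, hbr, -⟩ := mem_Nod.mp hq
  exact not_branching_singleton hbr

/-- splitting the edge of a branching dyadic node at the boundary vertex -/
theorem branching_split {E : Finset (V × V)} {r : V → ℕ} {S : Finset (V × V)}
    {x y : V} (hS : GoodPath E r S x y) {s j : ℕ} (hbr : Branching r S s j)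
    (v0 : V) :
    (edgeOf r S s j v0).1 = (halfEdge r (Lhalf r S s j) v0).1 ∧
    (halfEdge r (Lhalf r S s j) v0).2 = (halfEdge r (Rhalf r S s j) v0).1 ∧
    (halfEdge r (Rhalf r S s j) v0).2 = (edgeOf r S s j v0).2 := by
  have hinj : ∀ T : Finset (V × V), T ⊆ S →
      ∀ a ∈ T, ∀ b ∈ T, key r a = key r b → a = b :=
    fun T hT a ha b hb h => hS.inj a (hT ha) b (hT hb) h
  have hLsub : Lhalf r S s j ⊆ DS r S s j := Lhalf_subset_DS
  have hRsub : Rhalf r S s j ⊆ DS r S s j := Rhalf_subset_DS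
  have hDsub : DS r S s j ⊆ S := DS_subset
  -- membership facts
  have hLmem : ∀ a ∈ Lhalf r S s j,
      j * 2 ^ s ≤ key r a ∧ key r a < j * 2 ^ s + 2 ^ (s - 1) :=
    fun a ha => (mem_filter.mp ha).2
  have hRmem : ∀ a ∈ Rhalf r S s j,
      j * 2 ^ s + 2 ^ (s - 1) ≤ key r a ∧ key r a < j * 2 ^ s + 2 ^ s :=
    fun a ha => (mem_filter.mp ha).2
  obtain ⟨am, ham, hammin⟩ := (Lhalf r S s j).exists_min_image (key r) hbr.1
  obtain ⟨aM, haM, haMmax⟩ := (Lhalf r S s j).exists_max_image (key r) hbr.1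
  obtain ⟨bm, hbm, hbmmin⟩ := (Rhalf r S s j).exists_min_image (key r) hbr.2
  obtain ⟨bM, hbM, hbMmax⟩ := (Rhalf r S s j).exists_max_image (key r) hbr.2
  have hDS := DS_eq_union (r := r) (S := S) (s := s) (j := j)
  have hmemD : ∀ c ∈ DS r S s j, c ∈ Lhalf r S s j ∨ c ∈ Rhalf r S s j := by
    intro c hc; rw [hDS] at hc; exact mem_union.mp hc
  -- 1) first vertex
  have h1 : firstV r (DS r S s j) v0 = am.1 := by
    refine firstV_eq (hinj _ hDsub) (hLsub ham) (fun c hc => ?_)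
    rcases hmemD c hc with h | h
    · exact hammin c h
    · have := (hLmem am ham).2
      have := (hRmem c h).1
      omega
  have h1' : firstV r (Lhalf r S s j) v0 = am.1 :=
    firstV_eq (hinj _ (fun a ha => hDsub (hLsub ha))) ham hammin
  -- 2) last vertex
  have h2 : lastV r (DS r S s j) v0 = bM.2 := by
    refine lastV_eq (hinj _ hDsub) (hRsub hbM) (fun c hc => ?_)
    rcases hmemD c hc with h | h
    · have := (hLmem c h).2
      have := (hRmem bM hbM).1
      omega
    · exact hbMmax c h
  have h2' : lastV r (Rhalf r S s j) v0 = bM.2 :=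
    lastV_eq (hinj _ (fun a ha => hDsub (hRsub ha))) hbM hbMmax
  -- 3) seam
  have h3 : lastV r (Lhalf r S s j) v0 = aM.2 :=
    lastV_eq (hinj _ (fun a ha => hDsub (hLsub ha))) haM haMmax
  have h4 : firstV r (Rhalf r S s j) v0 = bm.1 :=
    firstV_eq (hinj _ (fun a ha => hDsub (hRsub ha))) hbm hbmmin
  have hseam : aM.2 = bm.1 := by
    refine hS.link aM (hDsub (hLsub haM)) bm (hDsub (hRsub hbm)) ?_ ?_
    · have := (hLmem aM haM).2
      have := (hRmem bm hbm).1
      omega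
    · intro c hc
      by_contra hcon
      push_neg at hcon
      obtain ⟨hca, hcb⟩ := hcon
      have hcD : c ∈ DS r S s j := by
        rw [DS, mem_filter]
        have := (hLmem aM haM).1
        have := (hRmem bm hbm).2
        exact ⟨hc, by omega, by omega⟩
      rcases hmemD c hcD with h | h
      · exact absurd (haMmax c h) (by omega)
      · exact absurd (hbmmin c h) (by omega)
  refine ⟨?_, ?_, ?_⟩
  · rw [edgeOf, halfEdge, halfEdge, h1, h1']
  · rw [halfEdge, halfEdge, h3, h4, hseam]
  · rw [edgeOf, halfEdge, halfEdge, h2, h2']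

end CSLDR
end PartD
section Main
open Finset CSLDR

set_option maxHeartbeats 1000000 in
/-- Any certified shortcut `H` of an `n`-vertex DAG can be extended to a sequence of
`O(log n)` rounds `H_1, …, H_k` of total size `O(|H| log n)` such that every edge of `H`
appears in `E` or some round, and every edge of each round is certified by `E` together
with strictly earlier rounds. -/
theorem certified_shortcut_low_depth_rounds :
    ∃ C : ℝ, 0 < C ∧
      ∀ (V : Type) [Fintype V] [DecidableEq V] (E H : Finset (V × V)) (f : V → ℕ),
        2 ≤ Fintype.card V →
        (∀ e ∈ E ∪ H, f e.1 < f e.2) →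
        (∀ e ∈ H, ∃ w : V, (e.1, w) ∈ E ∪ H ∧ (w, e.2) ∈ E ∪ H) →
        ∃ (k : ℕ) (Hs : Fin k → Finset (V × V)),
          (k : ℝ) ≤ C * Real.log (Fintype.card V) ∧
          (∀ e ∈ H, e ∈ E ∨ ∃ i : Fin k, e ∈ Hs i) ∧
          ((∑ i, (Hs i).card : ℕ) : ℝ) ≤ C * H.card * Real.log (Fintype.card V) ∧
          ∀ i : Fin k, ∀ e ∈ Hs i, ∃ w : V,
            ((e.1, w) ∈ E ∨ ∃ j : Fin k, j < i ∧ (e.1, w) ∈ Hs j) ∧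
            ((w, e.2) ∈ E ∨ ∃ j : Fin k, j < i ∧ (w, e.2) ∈ Hs j) := by
  classical
  refine ⟨6, by norm_num, ?_⟩
  intro V _ _ E H f hcard hf hcert
  have hV : Nonempty V := Fintype.card_pos_iff.mp (by omega)
  set n := Fintype.card V with hn
  -- injective labeling
  have hιex : ∃ ι : V → ℕ, Function.Injective ι :=
    ⟨fun v => ((Fintype.equivFin V) v : ℕ), fun a b h => by
      exact (Fintype.equivFin V).injective (Fin.ext h)⟩
  obtain ⟨ι, hιinj⟩ := hιex
  -- a strict linear order refining f, and its rank function
  set P : V → V → Prop := fun u v => f u < f v ∨ (f u = f v ∧ ι u < ι v) with hPdef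
  have hPirr : ∀ v, ¬ P v v := by
    intro v h
    rcases h with h | ⟨-, h⟩ <;> omega
  have hPtrans : ∀ a b c, P a b → P b c → P a c := by
    intro a b c h1 h2
    rcases h1 with h1 | ⟨h1, h1'⟩ <;> rcases h2 with h2 | ⟨h2, h2'⟩
    · exact Or.inl (by omega)
    · exact Or.inl (by omega)
    · exact Or.inl (by omega)
    · exact Or.inr ⟨by omega, by omega⟩
  set r : V → ℕ := fun v => (univ.filter (fun u => P u v)).card with hrdef
  have hrlt : ∀ v, r v < n := by
    intro v
    have hsub : univ.filter (fun u => P u v) ⊆ univ.erase v := by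
      intro u hu
      rw [mem_filter] at hu
      refine mem_erase.mpr ⟨?_, mem_univ _⟩
      rintro rfl
      exact hPirr _ hu.2
    calc r v ≤ (univ.erase v).card := card_le_card hsub
      _ = n - 1 := by rw [card_erase_of_mem (mem_univ _), card_univ]
      _ < n := by omega
  have hrmono : ∀ u v, P u v → r u < r v := by
    intro u v huv
    refine card_lt_card ?_
    rw [ssubset_iff_of_subset (fun a ha => ?_)]
    · exact ⟨u, mem_filter.mpr ⟨mem_univ _, huv⟩,
        fun hu => hPirr u (mem_filter.mp hu).2⟩
    · rw [mem_filter] at ha ⊢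
      exact ⟨mem_univ _, hPtrans _ _ _ ha.2 huv⟩
  have hredge : ∀ e ∈ E ∪ H, r e.1 < r e.2 :=
    fun e he => hrmono _ _ (Or.inl (hf e he))
  -- a total certificate-midpoint function
  have hcert' : ∀ e : V × V, ∃ w : V,
      e ∈ H → ((e.1, w) ∈ E ∪ H ∧ (w, e.2) ∈ E ∪ H) := by
    intro e
    by_cases he : e ∈ H
    · obtain ⟨w, hw⟩ := hcert e he
      exact ⟨w, fun _ => hw⟩
    · exact ⟨Classical.arbitrary V, fun h => absurd h he⟩
  choose cw hcw' using hcert'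
  have hcw : ∀ e ∈ H, (e.1, cw e) ∈ E ∪ H ∧ (cw e, e.2) ∈ E ∪ H :=
    fun e he => hcw' e he
  -- bits
  set B : ℕ := Nat.clog 2 n with hBdef
  have hn2B : n ≤ 2 ^ B := Nat.le_pow_clog (by norm_num) n
  have hkeyB : ∀ a : V × V, key r a < 2 ^ B :=
    fun a => lt_of_lt_of_le (hrlt a.1) hn2B
  set v0 : V := Classical.arbitrary V with hv0
  have hgapn : ∀ e ∈ E ∪ H, r e.2 ≤ r e.1 + n := by
    intro e he
    have := hrlt e.2
    omega
  have hGP : ∀ e ∈ E ∪ H, GoodPath E r (Spath E cw n e) e.1 e.2 :=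
    fun e he => Spath_good hredge hcw n e he (hgapn e he)
  -- the rounds
  set Hs : Fin (B + 1) → Finset (V × V) := fun i =>
    H.biUnion (fun e =>
      ((range (2 ^ B)).filter (fun jj => Branching r (Spath E cw n e) i.1 jj)).image
        (fun jj => edgeOf r (Spath E cw n e) i.1 jj v0)) with hHsdef
  have hmemHs : ∀ (i : Fin (B + 1)) (ed : V × V),
      ed ∈ Hs i ↔ ∃ e ∈ H, ∃ jj, jj < 2 ^ B ∧ Branching r (Spath E cw n e) i.1 jj ∧
        ed = edgeOf r (Spath E cw n e) i.1 jj v0 := by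
    intro i ed
    simp only [hHsdef, mem_biUnion, mem_image, mem_filter, mem_range]
    constructor
    · rintro ⟨e, he, jj, ⟨h1, h2⟩, h3⟩
      exact ⟨e, he, jj, h1, h2, h3.symm⟩
    · rintro ⟨e, he, jj, h1, h2, h3⟩
      exact ⟨e, he, jj, ⟨h1, h2⟩, h3.symm⟩
  -- j-range helper
  have hjlt : ∀ (S : Finset (V × V)) (s' j' : ℕ), Branching r S s' j' → j' < 2 ^ B := by
    intro S s' j' hbr
    obtain ⟨a, ha⟩ := hbr.1
    rw [Lhalf, mem_filter] at ha
    have h1 : j' ≤ j' * 2 ^ s' := Nat.le_mul_of_pos_right _ (pow_pos (by norm_num) _)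
    have h2 := hkeyB a
    have := ha.2.1
    omega
  -- resolving a nonempty dyadic fragment into E or some round ≤ s0
  have hresolve : ∀ e ∈ H, ∀ s0 j0 : ℕ, (DS r (Spath E cw n e) s0 j0).Nonempty →
      halfEdge r (DS r (Spath E cw n e) s0 j0) v0 ∈ E ∨
        ∃ s', s' ≤ s0 ∧ ∃ hlt : s' < B + 1,
          halfEdge r (DS r (Spath E cw n e) s0 j0) v0 ∈ Hs ⟨s', hlt⟩ := by
    intro e he s0 j0 hne
    have hGPe := hGP e (mem_union_right _ he)
    have hDsub : DS r (Spath E cw n e) s0 j0 ⊆ Spath E cw n e := DS_subset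
    rcases Nat.lt_or_ge (DS r (Spath E cw n e) s0 j0).card 2 with hc | hc
    · have hc1 : (DS r (Spath E cw n e) s0 j0).card = 1 := by
        have := card_pos.mpr hne
        omega
      obtain ⟨a, ha⟩ := card_eq_one.mp hc1
      rw [ha, halfEdge_singleton]
      exact Or.inl (hGPe.subE a (hDsub (by rw [ha]; exact mem_singleton_self _)))
    · obtain ⟨s', j', hle, hbr, heq⟩ := descend hGPe.inj s0 j0 hc
      have hs'B : s' < B + 1 := by
        obtain ⟨a, ha⟩ := hbr.1
        rw [Lhalf, mem_filter] at ha
        -- s' is at most B since keys are < 2^B... (we get it from j' bound instead)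
        -- keys < 2^B. If s' > B then the interval [j'*2^s', ...) with j' ≥ 1 exceeds... use keys.
        -- simpler: from Lhalf nonempty and Rhalf nonempty:
        obtain ⟨b, hb⟩ := hbr.2
        rw [Rhalf, mem_filter] at hb
        have hka := hkeyB a
        have hkb := hkeyB b
        have hpow : 2 ^ (s' - 1) ≤ key r b := le_trans (Nat.le_add_left _ _) hb.2.1
        have hmono : ∀ u w : ℕ, u ≤ w → (2:ℕ) ^ u ≤ 2 ^ w :=
          fun u w huw => Nat.pow_le_pow_right (by norm_num) huw
        by_contra hcon
        have hs1 : B ≤ s' - 1 := by omega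
        have := hmono B (s' - 1) hs1
        omega
      refine Or.inr ⟨s', hle, hs'B, ?_⟩
      rw [hmemHs]
      refine ⟨e, he, j', hjlt _ _ _ hbr, hbr, ?_⟩
      rw [edgeOf, heq]
  -- bound on the number of rounds
  have hB1 : 1 ≤ B := by
    by_contra h
    have hB0 : B = 0 := by omega
    rw [hB0, pow_zero] at hn2B
    omega
  have hkreal : ((B + 1 : ℕ) : ℝ) ≤ 6 * Real.log n := by
    have hpow : (2:ℕ) ^ (B - 1) < n := by
      have := Nat.pow_pred_clog_lt_self (by norm_num : 1 < 2) (show 1 < n by omega)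
      simpa [hBdef, Nat.pred_eq_sub_one] using this
    have h2R : ((2:ℝ)) ^ (B - 1) < (n:ℝ) := by exact_mod_cast hpow
    have h3 := Real.log_lt_log (by positivity) h2R
    rw [Real.log_pow] at h3
    have hcast : ((B - 1 : ℕ) : ℝ) = (B : ℝ) - 1 := by
      rw [Nat.cast_sub hB1, Nat.cast_one]
    rw [hcast] at h3
    have hlog2 : (0.6931471803:ℝ) < Real.log 2 := Real.log_two_gt_d9
    have hlogn : Real.log 2 ≤ Real.log n := by
      apply Real.log_le_log (by norm_num)
      exact_mod_cast hcard
    have hBge : (1:ℝ) ≤ (B:ℝ) := by exact_mod_cast hB1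
    have hprod : (0:ℝ) ≤ ((B:ℝ) - 1) * (Real.log 2 - 0.6931471803) :=
      mul_nonneg (by linarith) (by linarith)
    push_cast
    nlinarith [h3, hlog2, hlogn, hBge, hprod]
  -- the counting family
  set New : V × V → Finset (ℕ × (V × V)) := fun e =>
    (range (B + 1)).image (fun s =>
      (s, edgeOf r (Spath E cw n e) s
            (((Spath E cw n (e.1, cw e)).sup (key r)) / 2 ^ s) v0)) with hNewdef
  have hcount : ∀ fuel, ∀ e ∈ E ∪ H, r e.2 ≤ r e.1 + fuel →
      Nod r B v0 (Spath E cw n e) ⊆ H.biUnion New := by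
    intro fuel
    induction fuel with
    | zero =>
      intro e he hgap
      exact absurd (hredge e he) (by omega)
    | succ fuel ih =>
      intro e he hgap
      by_cases heE : e ∈ E
      · have hrew : Spath E cw n e = {e} := Spath_E heE (by omega)
        rw [hrew, Nod_singleton]
        exact empty_subset _
      · have heH : e ∈ H := (mem_union.mp he).resolve_left heE
        obtain ⟨hc1, hc2⟩ := hcw e heH
        have hw1 : r e.1 < r (cw e) := hredge _ hc1
        have hw2 : r (cw e) < r e.2 := hredge _ hc2
        have hsplit : Spath E cw n e
            = Spath E cw n (e.1, cw e) ∪ Spath E cw n (cw e, e.2) :=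
          Spath_unfold hredge hcw
            (fun e' he' => ⟨hgapn e' he', le_of_lt (hrlt e'.2)⟩) heH heE
        intro q hq
        obtain ⟨s, jj, hsB, hjB, hbr, rfl⟩ := mem_Nod.mp hq
        have hDSu : DS r (Spath E cw n e) s jj
            = DS r (Spath E cw n (e.1, cw e)) s jj
              ∪ DS r (Spath E cw n (cw e, e.2)) s jj := by
          rw [DS, hsplit, filter_union]
          rfl
        have hLu : Lhalf r (Spath E cw n e) s jj
            = Lhalf r (Spath E cw n (e.1, cw e)) s jj
              ∪ Lhalf r (Spath E cw n (cw e, e.2)) s jj := by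
          rw [Lhalf, hsplit, filter_union]
          rfl
        have hRu : Rhalf r (Spath E cw n e) s jj
            = Rhalf r (Spath E cw n (e.1, cw e)) s jj
              ∪ Rhalf r (Spath E cw n (cw e, e.2)) s jj := by
          rw [Rhalf, hsplit, filter_union]
          rfl
        by_cases h1e : (DS r (Spath E cw n (e.1, cw e)) s jj).Nonempty
        · by_cases h2e : (DS r (Spath E cw n (cw e, e.2)) s jj).Nonempty
          · -- a genuinely new node, crossing the certificate midpoint
            apply mem_biUnion.mpr
            refine ⟨e, heH, ?_⟩
            have hGP1 := hGP _ hc1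
            have hGP2 := hGP _ hc2
            obtain ⟨aS, haS, hsupeq⟩ :=
              Finset.exists_mem_eq_sup _ hGP1.nonempty (key r)
            obtain ⟨a1, ha1⟩ := h1e
            obtain ⟨a2, ha2⟩ := h2e
            rw [DS, mem_filter] at ha1 ha2
            have hlo : jj * 2 ^ s ≤ (Spath E cw n (e.1, cw e)).sup (key r) :=
              le_trans ha1.2.1 (Finset.le_sup ha1.1)
            have hhi : (Spath E cw n (e.1, cw e)).sup (key r) < jj * 2 ^ s + 2 ^ s := by
              have h6 : key r aS < r (cw e) := hGP1.ub aS haS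
              have h7 : r (cw e) ≤ key r a2 := hGP2.lb a2 ha2.1
              have h8 := ha2.2.2
              omega
            have hdiv : (Spath E cw n (e.1, cw e)).sup (key r) / 2 ^ s = jj := by
              refine Nat.div_eq_of_lt_le hlo ?_
              rw [Nat.succ_mul]
              exact hhi
            rw [hNewdef]
            apply mem_image.mpr
            exact ⟨s, mem_range.mpr hsB, by rw [hdiv]⟩
          · -- the fragment lies entirely inside the left child
            rw [not_nonempty_iff_eq_empty] at h2e
            have hDeq : DS r (Spath E cw n e) s jj
                = DS r (Spath E cw n (e.1, cw e)) s jj := by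
              rw [hDSu, h2e, union_empty]
            have hL2 : Lhalf r (Spath E cw n (cw e, e.2)) s jj = ∅ :=
              subset_empty.mp (h2e ▸ Lhalf_subset_DS)
            have hR2 : Rhalf r (Spath E cw n (cw e, e.2)) s jj = ∅ :=
              subset_empty.mp (h2e ▸ Rhalf_subset_DS)
            have hbr1 : Branching r (Spath E cw n (e.1, cw e)) s jj := by
              constructor
              · have h := hbr.1
                rw [hLu, hL2, union_empty] at h
                exact h
              · have h := hbr.2
                rw [hRu, hR2, union_empty] at h
                exact h
            have hedge : edgeOf r (Spath E cw n e) s jj v0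
                = edgeOf r (Spath E cw n (e.1, cw e)) s jj v0 := by
              rw [edgeOf, edgeOf, hDeq]
            rw [hedge]
            exact ih (e.1, cw e) hc1 (by change r (cw e) ≤ r e.1 + fuel; omega)
              (mem_Nod.mpr ⟨s, jj, hsB, hjB, hbr1, rfl⟩)
        · -- the fragment lies entirely inside the right child
          rw [not_nonempty_iff_eq_empty] at h1e
          have hDeq : DS r (Spath E cw n e) s jj
              = DS r (Spath E cw n (cw e, e.2)) s jj := by
            rw [hDSu, h1e, empty_union]
          have hL2 : Lhalf r (Spath E cw n (e.1, cw e)) s jj = ∅ :=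
            subset_empty.mp (h1e ▸ Lhalf_subset_DS)
          have hR2 : Rhalf r (Spath E cw n (e.1, cw e)) s jj = ∅ :=
            subset_empty.mp (h1e ▸ Rhalf_subset_DS)
          have hbr2 : Branching r (Spath E cw n (cw e, e.2)) s jj := by
            constructor
            · have h := hbr.1
              rw [hLu, hL2, empty_union] at h
              exact h
            · have h := hbr.2
              rw [hRu, hR2, empty_union] at h
              exact h
          have hedge : edgeOf r (Spath E cw n e) s jj v0
              = edgeOf r (Spath E cw n (cw e, e.2)) s jj v0 := by
            rw [edgeOf, edgeOf, hDeq]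
          rw [hedge]
          exact ih (cw e, e.2) hc2 (by change r e.2 ≤ r (cw e) + fuel; omega)
            (mem_Nod.mpr ⟨s, jj, hsB, hjB, hbr2, rfl⟩)
  -- now assemble the four claims
  refine ⟨B + 1, Hs, ?_, ?_, ?_, ?_⟩
  · -- (1) number of rounds
    exact_mod_cast hkreal
  · -- (2) every H-edge appears
    intro e he
    have hGPe := hGP e (mem_union_right _ he)
    rcases Nat.lt_or_ge (Spath E cw n e).card 2 with hclt | hcge
    · have hc1 : (Spath E cw n e).card = 1 := by
        have := card_pos.mpr hGPe.nonempty
        omega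
      obtain ⟨a, ha⟩ := card_eq_one.mp hc1
      have haS : a ∈ Spath E cw n e := by
        rw [ha]
        exact mem_singleton_self _
      have h1 : a.1 = e.1 := hGPe.min_src a haS (fun c hc => by
        rw [ha, mem_singleton] at hc
        rw [hc])
      have h2 : a.2 = e.2 := hGPe.max_tgt a haS (fun c hc => by
        rw [ha, mem_singleton] at hc
        rw [hc])
      have hae : a = e := Prod.ext h1 h2
      left
      rw [← hae]
      exact hGPe.subE a haS
    · right
      have hDStop : DS r (Spath E cw n e) B 0 = Spath E cw n e := by
        rw [DS]
        refine filter_true_of_mem (fun a ha => ⟨by simp, ?_⟩)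
        have := hkeyB a
        omega
      obtain ⟨s', j', hle, hbr, heq⟩ :=
        descend hGPe.inj B 0 (by rw [hDStop]; exact hcge)
      refine ⟨⟨s', by omega⟩, ?_⟩
      rw [hmemHs]
      refine ⟨e, he, j', hjlt _ _ _ hbr, hbr, ?_⟩
      rw [edgeOf, heq, hDStop]
      obtain ⟨am, ham, hammin⟩ := (Spath E cw n e).exists_min_image (key r) hGPe.nonempty
      obtain ⟨aM, haM, haMmax⟩ := (Spath E cw n e).exists_max_image (key r) hGPe.nonempty
      rw [halfEdge, firstV_eq hGPe.inj ham hammin, lastV_eq hGPe.inj haM haMmax,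
        hGPe.min_src am ham hammin, hGPe.max_tgt aM haM haMmax]
  · -- (3) total size
    have hsubun : (univ.biUnion
          (fun i : Fin (B + 1) => (Hs i).image (fun ed => (i.1, ed))))
        ⊆ H.biUnion New := by
      intro q hq
      obtain ⟨i, -, hq⟩ := mem_biUnion.mp hq
      obtain ⟨ed, hed, rfl⟩ := mem_image.mp hq
      obtain ⟨e, he, jj, hjB, hbr, rfl⟩ := (hmemHs i ed).mp hed
      exact hcount n e (mem_union_right _ he) (hgapn e (mem_union_right _ he))
        (mem_Nod.mpr ⟨i.1, jj, i.isLt, hjB, hbr, rfl⟩)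
    have hdisj : ∀ i ∈ (univ : Finset (Fin (B + 1))), ∀ i' ∈ univ, i ≠ i' →
        Disjoint ((Hs i).image (fun ed => (i.1, ed)))
          ((Hs i').image (fun ed => (i'.1, ed))) := by
      intro i _ i' _ hne
      rw [disjoint_left]
      rintro q hq hq'
      obtain ⟨ed, -, rfl⟩ := mem_image.mp hq
      obtain ⟨ed', -, heq⟩ := mem_image.mp hq'
      apply hne
      apply Fin.ext
      have h1 := (Prod.ext_iff.mp heq).1
      exact h1.symm
    have hsum1 : ∑ i, (Hs i).card ≤ H.card * (B + 1) := by
      have hcardim : ∀ i : Fin (B + 1),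
          ((Hs i).image (fun ed => (i.1, ed))).card = (Hs i).card :=
        fun i => card_image_of_injective _
          (fun a b h => (Prod.ext_iff.mp h).2)
      calc ∑ i, (Hs i).card
          = ∑ i, ((Hs i).image (fun ed => (i.1, ed))).card := by
            refine Finset.sum_congr rfl (fun i _ => (hcardim i).symm)
        _ = (univ.biUnion
              (fun i : Fin (B + 1) => (Hs i).image (fun ed => (i.1, ed)))).card :=
            (card_biUnion hdisj).symm
        _ ≤ (H.biUnion New).card := card_le_card hsubun
        _ ≤ ∑ e ∈ H, (New e).card := card_biUnion_le
        _ ≤ ∑ _e ∈ H, (B + 1) := by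
            refine sum_le_sum (fun e _ => ?_)
            rw [hNewdef]
            exact le_trans card_image_le (by rw [card_range])
        _ = H.card * (B + 1) := by rw [sum_const, smul_eq_mul]
    calc ((∑ i, (Hs i).card : ℕ) : ℝ)
        ≤ ((H.card * (B + 1) : ℕ) : ℝ) := by exact_mod_cast hsum1
      _ = (H.card : ℝ) * ((B + 1 : ℕ) : ℝ) := by push_cast; ring
      _ ≤ (H.card : ℝ) * (6 * Real.log n) :=
          mul_le_mul_of_nonneg_left hkreal (by positivity)
      _ = 6 * (H.card : ℝ) * Real.log n := by ring
  · -- (4) certification by earlier rounds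
    intro i e' he'
    obtain ⟨e, heH, jj, hjB, hbr, rfl⟩ := (hmemHs i e').mp he'
    have hGPe := hGP e (mem_union_right _ heH)
    obtain ⟨hA, hB', hC⟩ := branching_split hGPe hbr v0
    have hi1 : 1 ≤ i.1 := hbr.one_le
    have hiB := i.isLt
    have hLD : Lhalf r (Spath E cw n e) i.1 jj
        = DS r (Spath E cw n e) (i.1 - 1) (2 * jj) := Lhalf_eq_DS hi1
    have hRD : Rhalf r (Spath E cw n e) i.1 jj
        = DS r (Spath E cw n e) (i.1 - 1) (2 * jj + 1) := Rhalf_eq_DS hi1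
    refine ⟨(halfEdge r (Lhalf r (Spath E cw n e) i.1 jj) v0).2, ?_, ?_⟩
    · have hpair : ((edgeOf r (Spath E cw n e) i.1 jj v0).1,
          (halfEdge r (Lhalf r (Spath E cw n e) i.1 jj) v0).2)
          = halfEdge r (DS r (Spath E cw n e) (i.1 - 1) (2 * jj)) v0 := by
        rw [← hLD, hA]
      rw [hpair]
      rcases hresolve e heH (i.1 - 1) (2 * jj)
          (by rw [← hLD]; exact hbr.1) with h | ⟨s', hs'le, hlt, hmem⟩
      · exact Or.inl h
      · refine Or.inr ⟨⟨s', hlt⟩, ?_, hmem⟩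
        rw [Fin.lt_def]
        simp only
        omega
    · have hpair : ((halfEdge r (Lhalf r (Spath E cw n e) i.1 jj) v0).2,
          (edgeOf r (Spath E cw n e) i.1 jj v0).2)
          = halfEdge r (DS r (Spath E cw n e) (i.1 - 1) (2 * jj + 1)) v0 := by
        rw [← hRD, hB', ← hC]
      rw [hpair]
      rcases hresolve e heH (i.1 - 1) (2 * jj + 1)
          (by rw [← hRD]; exact hbr.2) with h | ⟨s', hs'le, hlt, hmem⟩
      · exact Or.inl h
      · refine Or.inr ⟨⟨s', hlt⟩, ?_, hmem⟩
        rw [Fin.lt_def]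
        simp only
        omega

end Main
end

section
/- Consider a treap on n distinct elements with distinct priorities: the binary tree in which the root is the minimum-priority element, and the left/right subtrees are recursively treaps on the elements before/after the root in the sequence order. If priorities are assigned uniformly at random (a uniformly random permutation), then the expected depth of the treap is O(log n); moreover the depth is O(log n) with probability at least 1 − 1/n. -/
/-- The depth (number of ancestors, including itself) of element `i` in the treap on
`Fin n` with priorities `σ`: `j` is an ancestor of `i` iff `σ j` is minimal among the
priorities of the interval between `i` and `j`. -/
noncomputable def treapDepth (n : ℕ) (σ : Equiv.Perm (Fin n)) (i : Fin n) : ℕ :=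
  Nat.card {j : Fin n // ∀ k : Fin n, min i j ≤ k → k ≤ max i j → σ j ≤ σ k}

/-- The depth of the treap on `Fin n` with priorities `σ`. -/
noncomputable def treapMaxDepth (n : ℕ) (σ : Equiv.Perm (Fin n)) : ℕ :=
  Finset.univ.sup (treapDepth n σ)

/-!
If `j₀` is the element of a set `T` closest to `i` and all of `T` are ancestors of `i`, then
moving the priority of `j₀` (the minimum on `[i, j₀]`) to any of the `|j₀ - i|` positions of
`[i, j₀]` other than `i` keeps the rest of `T` ancestors of `i`, and these moves are injective.
Hence at most a fraction `∏_{j ∈ T} 1 / |j - i|` of the priority orders make all of `T` ancestors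
of `i`. Summing over `T` gives `E[2 ^ depth i] ≤ 2 ∏_{j ≠ i} (1 + 1 / |j - i|) ≤ 2 n²`.
Jensen's inequality turns this into `E[depth i] ≤ log₂ (2 n²)`, and Markov's inequality with a
union bound over `i` gives `P(depth > 10 log n) ≤ n · 2 n² / n⁶ ≤ 1 / n`.
-/

open Finset Equiv

theorem two_pow_card_filter_eq_sum_powerset {ι R : Type*} [Semiring R] (U : Finset ι)
    (p : ι → Prop) [DecidablePred p] :
    (2 : R) ^ #{j ∈ U | p j} = ∑ T ∈ U.powerset, if ∀ j ∈ T, p j then 1 else 0 := by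
  rw [sum_boole]
  norm_cast
  rw [← card_powerset]
  congr 2
  ext T
  simp [subset_iff, forall_and]

open Real in
theorem sum_div_card_le_logb_sum_two_rpow {ι : Type*} {s : Finset ι} (hs : s.Nonempty)
    (f : ι → ℝ) : (∑ x ∈ s, f x) / #s ≤ logb 2 ((∑ x ∈ s, (2 : ℝ) ^ f x) / #s) := by
  have hcard : (0 : ℝ) < #s := by exact_mod_cast hs.card_pos
  rw [le_logb_iff_rpow_le one_lt_two (by positivity)]
  calc (2 : ℝ) ^ ((∑ x ∈ s, f x) / #s)
      = ∏ x ∈ s, ((2 : ℝ) ^ f x) ^ (#s : ℝ)⁻¹ := by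
        simp only [div_eq_mul_inv, sum_mul, rpow_sum_of_pos two_pos, ← rpow_mul zero_le_two]
    _ ≤ ∑ x ∈ s, (#s : ℝ)⁻¹ * 2 ^ f x :=
        geom_mean_le_arith_mean_weighted s _ _ (fun _ _ => by positivity)
          (by simp [hcard.ne']) fun _ _ => by positivity
    _ = (∑ x ∈ s, (2 : ℝ) ^ f x) / #s := by rw [← mul_sum, div_eq_inv_mul]

theorem card_filter_lt_mul_two_rpow_le {ι : Type*} (s : Finset ι) (f : ι → ℝ) (t : ℝ) :
    (#{x ∈ s | t < f x} : ℝ) * 2 ^ t ≤ ∑ x ∈ s, (2 : ℝ) ^ f x :=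
  calc (#{x ∈ s | t < f x} : ℝ) * 2 ^ t = #{x ∈ s | t < f x} • (2 : ℝ) ^ t :=
        (nsmul_eq_mul _ _).symm
    _ ≤ ∑ x ∈ s with t < f x, (2 : ℝ) ^ f x := card_nsmul_le_sum _ _ _ fun x hx =>
        Real.rpow_le_rpow_of_exponent_le one_le_two (mem_filter.mp hx).2.le
    _ ≤ ∑ x ∈ s, (2 : ℝ) ^ f x :=
        sum_le_sum_of_subset_of_nonneg (filter_subset _ _) fun _ _ _ => by positivity

namespace Treap

variable {α : Type*} [LinearOrder α] [LocallyFiniteOrder α]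

def IsAncestor (σ : Perm α) (j i : α) : Prop := ∀ k ∈ uIcc i j, σ j ≤ σ k

instance (σ : Perm α) (j i : α) : Decidable (IsAncestor σ j i) := by
  unfold IsAncestor; infer_instance

theorem isAncestor_self (σ : Perm α) (i : α) : IsAncestor σ i i := by
  simp [IsAncestor]

theorem IsAncestor.mul_swap {σ : Perm α} {i j a b : α} (h : IsAncestor σ j i)
    (ha : a ≠ j) (hb : b ≠ j) (hab : a ∈ uIcc i j ↔ b ∈ uIcc i j) :
    IsAncestor (σ * swap a b) j i := by
  intro m hm
  rw [Perm.mul_apply, Perm.mul_apply, swap_apply_of_ne_of_ne ha.symm hb.symm]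
  rcases eq_or_ne m a with rfl | hma
  · rw [swap_apply_left]; exact h b (hab.mp hm)
  rcases eq_or_ne m b with rfl | hmb
  · rw [swap_apply_right]; exact h a (hab.mpr hm)
  rw [swap_apply_of_ne_of_ne hma hmb]; exact h m hm

theorem IsAncestor.mul_swap_apply_le {σ : Perm α} {i j k m : α} (h : IsAncestor σ j i)
    (hk : k ∈ uIcc i j) (hm : m ∈ uIcc i j) : (σ * swap j k) k ≤ (σ * swap j k) m := by
  rw [Perm.mul_apply, Perm.mul_apply, swap_apply_right]
  rcases eq_or_ne m j with rfl | hmj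
  · rw [swap_apply_left]; exact h k hk
  rcases eq_or_ne m k with rfl | hmk
  · rw [swap_apply_right]
  rw [swap_apply_of_ne_of_ne hmj hmk]; exact h m hm

-- Intervals from `i` to points on the same side of `i` are nested; on opposite sides they meet
-- only in `i`.
theorem ne_and_mem_uIcc_iff_of_card_le {i j j₀ k : α} (hk : k ∈ uIcc i j₀) (hki : k ≠ i)
    (hj : j ≠ j₀) (hcard : #(uIcc i j₀) ≤ #(uIcc i j)) :
    k ≠ j ∧ (j₀ ∈ uIcc i j ↔ k ∈ uIcc i j) := by
  rcases le_total i j₀ with h₀ | h₀ <;> rcases le_total i j with h | h <;>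
    simp only [uIcc_of_le, uIcc_of_ge, h, h₀, mem_Icc] at hk hcard ⊢ <;>
    obtain ⟨hk₁, hk₂⟩ := hk
  · have : j₀ < j := lt_of_le_of_ne (not_lt.mp fun hlt =>
      (card_lt_card (Icc_ssubset_Icc_right h₀ le_rfl hlt)).not_ge hcard) hj.symm
    grind
  · grind
  · grind
  · have : j < j₀ := lt_of_le_of_ne' (not_lt.mp fun hlt =>
      (card_lt_card (Icc_ssubset_Icc_left h₀ hlt le_rfl)).not_ge hcard) hj.symm
    grind

theorem card_uIcc_erase_pos {i j : α} (h : j ≠ i) : 0 < #((uIcc i j).erase i) :=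
  card_pos.mpr ⟨j, mem_erase.mpr ⟨h, right_mem_uIcc⟩⟩

variable [Fintype α]

/-- The injection `(σ, k) ↦ σ * swap j₀ k`: `k` is recovered as the position of the minimal
priority on `uIcc i j₀`. -/
theorem card_isAncestor_mul_le_card_erase {i j₀ : α} {T : Finset α} (hj₀ : j₀ ∈ T)
    (hmin : ∀ j ∈ T, #(uIcc i j₀) ≤ #(uIcc i j)) :
    #{σ : Perm α | ∀ j ∈ T, IsAncestor σ j i} * #((uIcc i j₀).erase i) ≤
      #{σ : Perm α | ∀ j ∈ T.erase j₀, IsAncestor σ j i} := by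
  rw [← card_product]
  refine card_le_card_of_injOn (fun p => p.1 * swap j₀ p.2) ?_ ?_
  · rintro ⟨σ, k⟩ hσk
    simp only [mem_coe, mem_product, mem_filter, mem_erase, mem_univ, true_and] at hσk ⊢
    obtain ⟨hσ, hki, hk⟩ := hσk
    rintro j ⟨hjj₀, hj⟩
    obtain ⟨hkj, hmem⟩ := ne_and_mem_uIcc_iff_of_card_le hk hki hjj₀ (hmin j hj)
    exact (hσ j hj).mul_swap hjj₀.symm hkj hmem
  · rintro ⟨σ, k⟩ hσk ⟨τ, l⟩ hτl (h : σ * swap j₀ k = τ * swap j₀ l)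
    simp only [mem_coe, mem_product, mem_filter, mem_erase, mem_univ, true_and] at hσk hτl
    have hσ := hσk.1 j₀ hj₀
    have hτ := hτl.1 j₀ hj₀
    have hkl : k = l := (σ * swap j₀ k).injective <| le_antisymm
      (hσ.mul_swap_apply_le hσk.2.2 hτl.2.2) (h ▸ hτ.mul_swap_apply_le hτl.2.2 hσk.2.2)
    subst hkl
    rw [mul_right_cancel h]

theorem card_isAncestor_mul_prod_le (i : α) (T : Finset α) :
    #{σ : Perm α | ∀ j ∈ T, IsAncestor σ j i} * ∏ j ∈ T, #((uIcc i j).erase i) ≤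
      Fintype.card (Perm α) := by
  induction T using Finset.strongInduction with
  | H T ih =>
  rcases T.eq_empty_or_nonempty with rfl | hT
  · simp
  obtain ⟨j₀, hj₀, hmin⟩ := exists_min_image T (fun j => #(uIcc i j)) hT
  calc #{σ : Perm α | ∀ j ∈ T, IsAncestor σ j i} * ∏ j ∈ T, #((uIcc i j).erase i)
      = #{σ : Perm α | ∀ j ∈ T, IsAncestor σ j i} * #((uIcc i j₀).erase i) *
          ∏ j ∈ T.erase j₀, #((uIcc i j).erase i) := by
        rw [← mul_prod_erase T _ hj₀, mul_assoc]
    _ ≤ #{σ : Perm α | ∀ j ∈ T.erase j₀, IsAncestor σ j i} *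
          ∏ j ∈ T.erase j₀, #((uIcc i j).erase i) :=
        Nat.mul_le_mul_right _ (card_isAncestor_mul_le_card_erase hj₀ hmin)
    _ ≤ Fintype.card (Perm α) :=
        ih _ (erase_ssubset hj₀)

/-- Expand `2 ^ #S` as the number of subsets `T ⊆ S` and exchange the sums. -/
theorem sum_two_pow_card_ancestors_le (i : α) (U : Finset α) (hi : i ∉ U) :
    ∑ σ : Perm α, (2 : ℝ) ^ #{j ∈ U | IsAncestor σ j i} ≤
      Fintype.card (Perm α) * ∏ j ∈ U, (1 + (#((uIcc i j).erase i) : ℝ)⁻¹) := by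
  have hT : ∀ T ∈ U.powerset, (#{σ : Perm α | ∀ j ∈ T, IsAncestor σ j i} : ℝ) ≤
      Fintype.card (Perm α) * ∏ j ∈ T, (#((uIcc i j).erase i) : ℝ)⁻¹ := by
    intro T hT
    have hpos : (0 : ℝ) < ∏ j ∈ T, (#((uIcc i j).erase i) : ℝ) := prod_pos fun j hj =>
      Nat.cast_pos.mpr (card_uIcc_erase_pos fun h => hi (mem_powerset.mp hT (h ▸ hj)))
    rw [prod_inv_distrib, ← div_eq_mul_inv, le_div_iff₀ hpos]
    exact_mod_cast card_isAncestor_mul_prod_le i T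
  calc ∑ σ : Perm α, (2 : ℝ) ^ #{j ∈ U | IsAncestor σ j i}
      = ∑ T ∈ U.powerset, (#{σ : Perm α | ∀ j ∈ T, IsAncestor σ j i} : ℝ) := by
        simp only [two_pow_card_filter_eq_sum_powerset]
        rw [sum_comm]
        exact sum_congr rfl fun T _ => by convert sum_boole _ _
    _ ≤ ∑ T ∈ U.powerset,
          Fintype.card (Perm α) * ∏ j ∈ T, (#((uIcc i j).erase i) : ℝ)⁻¹ := sum_le_sum hT
    _ = _ := by rw [← mul_sum, prod_one_add]

end Treap

open Real in
theorem logb_two_two_mul_sq_le {x : ℝ} (hx : 2 ≤ x) : logb 2 (2 * x ^ 2) ≤ 10 * log x := by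
  have hlog2 := log_two_gt_d9
  have hlogx : log 2 ≤ log x := log_le_log two_pos hx
  rw [logb, log_mul two_ne_zero (by positivity), log_pow, div_le_iff₀ (by positivity)]
  push_cast
  nlinarith

open Real in
theorem pow_six_le_two_rpow {x : ℝ} (hx : 1 ≤ x) : x ^ 6 ≤ 2 ^ (10 * log x) := by
  have hlog2 := log_two_gt_d9
  rw [rpow_def_of_pos two_pos, show log 2 * (10 * log x) = log x * (10 * log 2) by ring,
    ← rpow_def_of_pos (by positivity), ← rpow_natCast]
  exact rpow_le_rpow_of_exponent_le hx (by push_cast; linarith)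

theorem prod_Icc_one_add_inv (m : ℕ) : ∏ d ∈ Icc 1 m, (1 + (d : ℝ)⁻¹) = m + 1 := by
  induction m with
  | zero => simp
  | succ m ih =>
    rw [prod_Icc_succ_top (Nat.le_add_left 1 m), ih]
    push_cast
    field_simp

theorem prod_one_add_inv_le_of_injOn {ι : Type*} {s : Finset ι} {g : ι → ℕ} {m : ℕ}
    (hg : Set.InjOn g s) (hs : ∀ j ∈ s, g j ∈ Icc 1 m) :
    ∏ j ∈ s, (1 + (g j : ℝ)⁻¹) ≤ m + 1 := by
  classical
  calc ∏ j ∈ s, (1 + (g j : ℝ)⁻¹) = ∏ d ∈ s.image g, (1 + (d : ℝ)⁻¹) :=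
        (prod_image (f := fun d : ℕ => 1 + (d : ℝ)⁻¹) hg).symm
    _ ≤ ∏ d ∈ Icc 1 m, (1 + (d : ℝ)⁻¹) :=
        prod_le_prod_of_subset_of_one_le (image_subset_iff.mpr hs) (fun d _ => by positivity)
          fun d _ _ => le_add_of_nonneg_right (by positivity)
    _ = m + 1 := prod_Icc_one_add_inv m

theorem Fin.card_uIcc_erase_left {n : ℕ} (i j : Fin n) :
    #((uIcc i j).erase i) = ((j : ℤ) - i).natAbs := by
  rw [card_erase_of_mem left_mem_uIcc, Fin.card_uIcc]
  rfl

namespace Treap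

variable {n : ℕ}

theorem prod_one_add_inv_card_uIcc_erase_le (i : Fin n) :
    ∏ j ∈ univ.erase i, (1 + (#((uIcc i j).erase i) : ℝ)⁻¹) ≤ n ^ 2 := by
  have hn : ((n - 1 : ℕ) : ℝ) + 1 = n := by
    rw [Nat.cast_sub (Nat.one_le_of_lt i.isLt)]; ring
  simp only [Fin.card_uIcc_erase_left]
  rw [← prod_filter_mul_prod_filter_not (univ.erase i) (· < i), sq, ← hn]
  have hmaps : ∀ j ∈ univ.erase i, ((j : ℤ) - i).natAbs ∈ Icc 1 (n - 1) := by
    intro j hj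
    have := Fin.val_ne_of_ne (ne_of_mem_erase hj)
    simp only [mem_Icc]
    omega
  refine mul_le_mul
    (prod_one_add_inv_le_of_injOn ?_ fun j hj => hmaps j (mem_of_mem_filter j hj))
    (prod_one_add_inv_le_of_injOn ?_ fun j hj => hmaps j (mem_of_mem_filter j hj))
    (prod_nonneg fun _ _ => by positivity) (by positivity)
  all_goals
    intro a ha b hb hab
    simp only [coe_filter, mem_erase, mem_univ, and_true, Set.mem_ofPred_eq] at ha hb hab
    have := Fin.val_ne_of_ne ha.1
    have := Fin.val_ne_of_ne hb.1
    ext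
    omega

theorem treapDepth_eq_card_add_one (σ : Equiv.Perm (Fin n)) (i : Fin n) :
    treapDepth n σ i = #{j ∈ univ.erase i | IsAncestor σ j i} + 1 := by
  have hmem : i ∈ ({j | IsAncestor σ j i} : Finset (Fin n)) := by
    simp [isAncestor_self]
  rw [filter_erase, card_erase_of_mem hmem, Nat.sub_add_cancel (card_pos.mpr ⟨i, hmem⟩),
    treapDepth, Nat.card_eq_fintype_card, Fintype.card_subtype]
  congr
  ext j
  simp [IsAncestor, mem_uIcc]

theorem sum_two_pow_treapDepth_le (i : Fin n) :
    ∑ σ : Equiv.Perm (Fin n), (2 : ℝ) ^ treapDepth n σ i ≤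
      2 * n ^ 2 * Fintype.card (Equiv.Perm (Fin n)) := by
  calc ∑ σ : Equiv.Perm (Fin n), (2 : ℝ) ^ treapDepth n σ i
      = 2 * ∑ σ : Equiv.Perm (Fin n), (2 : ℝ) ^ #{j ∈ univ.erase i | IsAncestor σ j i} := by
        simp only [treapDepth_eq_card_add_one, pow_succ, mul_comm _ (2 : ℝ), mul_sum]
    _ ≤ 2 * (Fintype.card (Equiv.Perm (Fin n)) * n ^ 2) := by
        gcongr
        exact (sum_two_pow_card_ancestors_le i _ (notMem_erase i _)).trans
          (mul_le_mul_of_nonneg_left (prod_one_add_inv_card_uIcc_erase_le i) (by positivity))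
    _ = _ := by ring

theorem card_treapMaxDepth_gt_mul_two_rpow_le (t : ℝ) (ht : 0 ≤ t) :
    (#{σ : Equiv.Perm (Fin n) | t < treapMaxDepth n σ} : ℝ) * 2 ^ t ≤
      n * (2 * n ^ 2 * Fintype.card (Equiv.Perm (Fin n))) := by
  have hsub : ({σ | t < treapMaxDepth n σ} : Finset (Equiv.Perm (Fin n))) ⊆
      univ.biUnion fun i => {σ | t < treapDepth n σ i} := by
    intro σ
    simp only [mem_filter, mem_univ, true_and, mem_biUnion, treapMaxDepth, ← Nat.floor_lt ht,
      Finset.lt_sup_iff, imp_self]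
  calc (#{σ : Equiv.Perm (Fin n) | t < treapMaxDepth n σ} : ℝ) * 2 ^ t
      ≤ (∑ i, #{σ : Equiv.Perm (Fin n) | t < treapDepth n σ i} : ℝ) * 2 ^ t := by
        gcongr
        exact_mod_cast (card_le_card hsub).trans card_biUnion_le
    _ = ∑ i, (#{σ : Equiv.Perm (Fin n) | t < treapDepth n σ i} : ℝ) * 2 ^ t := by
        rw [sum_mul]
    _ ≤ ∑ _i : Fin n, 2 * n ^ 2 * (Fintype.card (Equiv.Perm (Fin n)) : ℝ) :=
        sum_le_sum fun i _ => (card_filter_lt_mul_two_rpow_le _ _ t).trans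
          (by simpa only [Real.rpow_natCast] using sum_two_pow_treapDepth_le i)
    _ = _ := by simp

theorem card_treapMaxDepth_gt_ten_mul_log_mul_le (hn : 2 ≤ n) :
    (#{σ : Equiv.Perm (Fin n) | 10 * Real.log n < treapMaxDepth n σ} : ℝ) * n ≤
      Fintype.card (Equiv.Perm (Fin n)) := by
  have hn' : (2 : ℝ) ≤ n := by exact_mod_cast hn
  have hpow := pow_six_le_two_rpow (x := n) (by linarith)
  have htail := card_treapMaxDepth_gt_mul_two_rpow_le (n := n) (10 * Real.log n)
    (by have := Real.log_nonneg (x := n) (by linarith); positivity)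
  set b := (#{σ : Equiv.Perm (Fin n) | 10 * Real.log n < treapMaxDepth n σ} : ℝ)
  set N := (Fintype.card (Equiv.Perm (Fin n)) : ℝ)
  have hb : b * (n : ℝ) ^ 6 ≤ 2 * n ^ 3 * N := by
    calc b * (n : ℝ) ^ 6 ≤ b * 2 ^ (10 * Real.log n) := by gcongr
      _ ≤ _ := by linarith
  refine le_of_mul_le_mul_right ?_ (by positivity : (0 : ℝ) < n ^ 5)
  calc b * n * n ^ 5 = b * n ^ 6 := by ring
    _ ≤ 2 * n ^ 3 * N := hb
    _ ≤ n ^ 2 * n ^ 3 * N := by gcongr; nlinarith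
    _ = N * n ^ 5 := by ring

end Treap

/-- With uniformly random priorities, the expected depth of every element of a treap on
`n` elements is `O(log n)`, and the depth of the treap is `O(log n)` with probability at
least `1 − 1/n`. -/
theorem treap_depth_log :
    ∃ C : ℝ, 0 < C ∧ ∀ n : ℕ, 2 ≤ n →
      (∀ i : Fin n,
        (∑ σ : Equiv.Perm (Fin n), (treapDepth n σ i : ℝ)) /
            (Fintype.card (Equiv.Perm (Fin n)) : ℝ) ≤ C * Real.log n) ∧
      1 - 1 / (n : ℝ) ≤
        (Nat.card {σ : Equiv.Perm (Fin n) //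
            (treapMaxDepth n σ : ℝ) ≤ C * Real.log n} : ℝ) /
          (Fintype.card (Equiv.Perm (Fin n)) : ℝ) := by
  refine ⟨10, by norm_num, fun n hn => ⟨fun i => ?_, ?_⟩⟩
  · calc (∑ σ : Equiv.Perm (Fin n), (treapDepth n σ i : ℝ)) /
          Fintype.card (Equiv.Perm (Fin n))
        ≤ Real.logb 2 ((∑ σ : Equiv.Perm (Fin n), (2 : ℝ) ^ treapDepth n σ i) /
            Fintype.card (Equiv.Perm (Fin n))) := by
          simpa only [Real.rpow_natCast, card_univ] using
            sum_div_card_le_logb_sum_two_rpow univ_nonempty fun σ => (treapDepth n σ i : ℝ)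
      _ ≤ Real.logb 2 (2 * n ^ 2) := Real.logb_le_logb_of_le one_lt_two (by positivity)
          (div_le_of_le_mul₀ (by positivity) (by positivity) (Treap.sum_two_pow_treapDepth_le i))
      _ ≤ 10 * Real.log n := logb_two_two_mul_sq_le (by exact_mod_cast hn)
  · have hN : (0 : ℝ) < Fintype.card (Equiv.Perm (Fin n)) := by
      exact_mod_cast Fintype.card_pos
    have hsplit := card_filter_add_card_filter_not (s := univ)
      fun σ : Equiv.Perm (Fin n) => (treapMaxDepth n σ : ℝ) ≤ 10 * Real.log n
    simp only [not_le, card_univ] at hsplit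
    replace hsplit := congrArg (Nat.cast (R := ℝ)) hsplit
    push_cast at hsplit
    have hbad := (le_div_iff₀ (by positivity)).mpr
      (Treap.card_treapMaxDepth_gt_ten_mul_log_mul_le hn)
    rw [Nat.card_eq_fintype_card, Fintype.card_subtype, le_div_iff₀ hN, sub_mul,
      one_div_mul_eq_div]
    linarith
end
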